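/- arXiv:0705.1646 — 2 statements merged into one kernel-verified Lean document; each statement's English description precedes it below -/
import Mathlib

section
/- Let ℓ ≥ 2 and let q ≥ 2 be a real number. Let λ = (λ_1,…,λ_k) be a composition of ℓ, set m_i = λ_1+⋯+λ_{i−1}+1 and n_i = λ_1+⋯+λ_i, and let w : ℝ^ℓ → ℝ^ℓ be the linear map with w(e_j) = e_{j+1} for m_i ≤ j ≤ n_i−1 and w(e_{n_i}) = e_{m_i} for each 1 ≤ i ≤ k. Then there exists x = (x_1,…,x_ℓ) ∈ ℝ^ℓ with x_1 > x_2 > ⋯ > x_ℓ and x_1 + x_2 + ⋯ + x_ℓ = 0 (i.e., x lies in the open Weyl chamber of type A_{ℓ−1}) such that ⟨qx − wx, e_i − e_{i+1}⟩ > 0 for all 1 ≤ i ≤ ℓ−1. -/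
/-!
Write `τ` for the cyclic shift of `{1, …, ℓ}` moving each index one step forward inside its
block (the last index of a block goes back to the first one), and `σ = τ⁻¹`, so that
`w e_j = e_{τ j}` and `(w x)_i = x_{σ i}`. Number the blocks `1, …, k` and put
`h_j = ℓ · (block of j) + j`; then `x = c - h`, with `c` the mean of `h`, lies in the open
Weyl chamber, and the required inequality becomes `h_{σ(i+1)} - h_{σ i} < q (h_{i+1} - h_i)`.
Inside a block the left side is at most `1 = h_{i+1} - h_i`, because `σ` is the shift back by
one except at the first index of a block, where it jumps to the largest index of the block.
Across a block boundary the block index grows by some `Δ ≥ 1`, and the left side is at most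
`ℓΔ + ℓ - 1 < 2 (ℓΔ + 1) = 2 (h_{i+1} - h_i)`.
-/

open scoped RealInnerProductSpace

/-- The standard basis vector `e_j` (1-based) of `ℝ^ℓ`; zero for out-of-range indices. -/
noncomputable def E (ℓ : ℕ) (j : ℕ) : EuclideanSpace ℝ (Fin ℓ) :=
  if h : 1 ≤ j ∧ j ≤ ℓ then EuclideanSpace.single (⟨j - 1, by omega⟩ : Fin ℓ) (1 : ℝ) else 0

/-- The vector `(x_1, …, x_ℓ) ∈ ℝ^ℓ` built from a (1-based) sequence of reals. -/
noncomputable def vec (ℓ : ℕ) (x : ℕ → ℝ) : EuclideanSpace ℝ (Fin ℓ) :=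
  WithLp.toLp 2 (fun i : Fin ℓ => x (i.1 + 1))

open Finset

section BasisVectors

variable {ℓ : ℕ}

lemma E_apply (j : ℕ) (p : Fin ℓ) : E ℓ j p = if j = p.1 + 1 then 1 else 0 := by
  unfold E
  split_ifs with h hj hj
  · rw [PiLp.single_apply, if_pos (Fin.ext (by simp only; omega))]
  · rw [PiLp.single_apply, if_neg fun hp => hj (by rw [hp]; simp only; omega)]
  · exact absurd ⟨by omega, by omega⟩ h
  · rfl

lemma inner_vec_E (x : ℕ → ℝ) {j : ℕ} (h1 : 1 ≤ j) (h2 : j ≤ ℓ) : ⟪vec ℓ x, E ℓ j⟫ = x j := by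
  rw [E, dif_pos ⟨h1, h2⟩, EuclideanSpace.inner_single_right]
  simp [vec, Nat.sub_add_cancel h1]

lemma inner_E_E_of_ne {a b : ℕ} (h : a ≠ b) : ⟪E ℓ a, E ℓ b⟫ = 0 := by
  simp only [PiLp.inner_apply, E_apply]
  refine sum_eq_zero fun p _ => ?_
  split_ifs <;> simp_all

lemma inner_E_self {j : ℕ} (h1 : 1 ≤ j) (h2 : j ≤ ℓ) : ⟪E ℓ j, E ℓ j⟫ = 1 := by
  rw [E, dif_pos ⟨h1, h2⟩, EuclideanSpace.inner_single_right]
  simp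

lemma vec_eq_sum (x : ℕ → ℝ) : vec ℓ x = ∑ j ∈ Icc 1 ℓ, x j • E ℓ j := by
  ext p
  simp [vec, E_apply, WithLp.ofLp_sum, Finset.sum_apply]

end BasisVectors

/-- With `N c = λ_1 + ⋯ + λ_c`, the `c`-th block is `(N (c - 1), N c]`, and `blockOf N j` is the
index of the block containing `j` (junk `0` when no `N c` reaches `j`). -/
noncomputable def blockOf (N : ℕ → ℕ) (j : ℕ) : ℕ := sInf {c | j ≤ N c}

noncomputable def blockSucc (N : ℕ → ℕ) (j : ℕ) : ℕ :=
  if j = N (blockOf N j) then N (blockOf N j - 1) + 1 else j + 1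

noncomputable def blockPred (N : ℕ → ℕ) (j : ℕ) : ℕ :=
  if j = N (blockOf N j - 1) + 1 then N (blockOf N j) else j - 1

section Blocks

variable {N : ℕ → ℕ} {k j : ℕ}

lemma blockOf_le (hj : j ≤ N k) : blockOf N j ≤ k := Nat.sInf_le hj

lemma blockOf_mono {j' : ℕ} (h : j ≤ j') (hj' : j' ≤ N k) : blockOf N j ≤ blockOf N j' :=
  Nat.sInf_le (h.trans (Nat.sInf_mem (s := {c | j' ≤ N c}) ⟨k, hj'⟩))

lemma mem_Ioc_blockOf (hN0 : N 0 = 0) (hj1 : 1 ≤ j) (hj : j ≤ N k) :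
    j ∈ Set.Ioc (N (blockOf N j - 1)) (N (blockOf N j)) := by
  have hmem : j ≤ N (blockOf N j) := Nat.sInf_mem (s := {c | j ≤ N c}) ⟨k, hj⟩
  refine ⟨?_, hmem⟩
  rcases Nat.eq_zero_or_pos (blockOf N j) with h0 | hpos
  · rw [h0, hN0]
    omega
  · exact not_le.mp (Nat.notMem_of_lt_sInf (s := {c | j ≤ N c}) (m := blockOf N j - 1) (by
      unfold blockOf at hpos ⊢
      omega))

lemma one_le_blockOf (hN0 : N 0 = 0) (hj1 : 1 ≤ j) (hj : j ≤ N k) : 1 ≤ blockOf N j := by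
  have := (mem_Ioc_blockOf hN0 hj1 hj).2
  by_contra h
  rw [Nat.lt_one_iff.mp (not_le.mp h), hN0] at this
  omega

lemma blockOf_eq (hN : Monotone N) {c : ℕ} (h : j ∈ Set.Ioc (N (c - 1)) (N c)) :
    blockOf N j = c := by
  have hle : blockOf N j ≤ c := Nat.sInf_le h.2
  have hmem : j ≤ N (blockOf N j) := Nat.sInf_mem (s := {c | j ≤ N c}) ⟨c, h.2⟩
  by_contra hne
  have := hN (show blockOf N j ≤ c - 1 by omega)
  exact absurd h.1 (by omega)

lemma blockSucc_mem_Ioc (hN0 : N 0 = 0) (hj1 : 1 ≤ j) (hj : j ≤ N k) :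
    blockSucc N j ∈ Set.Ioc (N (blockOf N j - 1)) (N (blockOf N j)) := by
  obtain ⟨h1, h2⟩ := mem_Ioc_blockOf hN0 hj1 hj
  unfold blockSucc
  split_ifs <;> constructor <;> omega

lemma blockPred_mem_Ioc (hN0 : N 0 = 0) (hj1 : 1 ≤ j) (hj : j ≤ N k) :
    blockPred N j ∈ Set.Ioc (N (blockOf N j - 1)) (N (blockOf N j)) := by
  obtain ⟨h1, h2⟩ := mem_Ioc_blockOf hN0 hj1 hj
  unfold blockPred
  split_ifs <;> constructor <;> omega

lemma blockOf_blockSucc (hN : Monotone N) (hN0 : N 0 = 0) (hj1 : 1 ≤ j) (hj : j ≤ N k) :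
    blockOf N (blockSucc N j) = blockOf N j :=
  blockOf_eq hN (blockSucc_mem_Ioc hN0 hj1 hj)

lemma blockOf_blockPred (hN : Monotone N) (hN0 : N 0 = 0) (hj1 : 1 ≤ j) (hj : j ≤ N k) :
    blockOf N (blockPred N j) = blockOf N j :=
  blockOf_eq hN (blockPred_mem_Ioc hN0 hj1 hj)

lemma blockPred_blockSucc (hN : Monotone N) (hN0 : N 0 = 0) (hj1 : 1 ≤ j) (hj : j ≤ N k) :
    blockPred N (blockSucc N j) = j := by
  obtain ⟨h1, h2⟩ := mem_Ioc_blockOf hN0 hj1 hj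
  unfold blockPred
  rw [blockOf_blockSucc hN hN0 hj1 hj]
  unfold blockSucc
  split_ifs <;> omega

lemma blockSucc_blockPred (hN : Monotone N) (hN0 : N 0 = 0) (hj1 : 1 ≤ j) (hj : j ≤ N k) :
    blockSucc N (blockPred N j) = j := by
  obtain ⟨h1, h2⟩ := mem_Ioc_blockOf hN0 hj1 hj
  unfold blockSucc
  rw [blockOf_blockPred hN hN0 hj1 hj]
  unfold blockPred
  split_ifs <;> omega

lemma le_blockPred_add_one (hN0 : N 0 = 0) (hj1 : 1 ≤ j) (hj : j ≤ N k) :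
    j ≤ blockPred N j + 1 := by
  obtain ⟨h1, h2⟩ := mem_Ioc_blockOf hN0 hj1 hj
  unfold blockPred
  split_ifs <;> omega

lemma blockPred_add_one (hN0 : N 0 = 0) (hj1 : 1 ≤ j) (hj : j ≤ N k)
    (h : blockOf N (j + 1) = blockOf N j) : blockPred N (j + 1) = j := by
  obtain ⟨h1, h2⟩ := mem_Ioc_blockOf hN0 hj1 hj
  unfold blockPred
  rw [h]
  split_ifs <;> omega

end Blocks

noncomputable def blockHeight (N : ℕ → ℕ) (ℓ j : ℕ) : ℕ := ℓ * blockOf N j + j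

section Height

variable {N : ℕ → ℕ} {k ℓ i : ℕ}

lemma blockHeight_lt_succ (hi : i + 1 ≤ N k) : blockHeight N ℓ i < blockHeight N ℓ (i + 1) := by
  have := Nat.mul_le_mul_left ℓ (blockOf_mono (Nat.le_add_right i 1) hi)
  unfold blockHeight
  omega

lemma blockHeight_blockPred_succ_lt (hN : Monotone N) (hN0 : N 0 = 0) (hℓ : N k ≤ ℓ)
    (hi1 : 1 ≤ i) (hi : i + 1 ≤ N k) :
    blockHeight N ℓ (blockPred N (i + 1)) + 2 * blockHeight N ℓ i <
      2 * blockHeight N ℓ (i + 1) + blockHeight N ℓ (blockPred N i) := by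
  have hi' : i ≤ N k := by omega
  have hpred := le_blockPred_add_one hN0 hi1 hi'
  unfold blockHeight
  rw [blockOf_blockPred hN hN0 hi1 hi', blockOf_blockPred hN hN0 (by omega) hi]
  rcases (blockOf_mono (Nat.le_add_right i 1) hi).eq_or_lt with hsame | hnext
  · rw [blockPred_add_one hN0 hi1 hi' hsame.symm, ← hsame]
    omega
  · have hσ_le : blockPred N (i + 1) ≤ ℓ :=
      ((blockPred_mem_Ioc hN0 (by omega) hi).2.trans (hN (blockOf_le hi))).trans hℓ
    have hσ_pos : 1 ≤ blockPred N i := Nat.one_le_of_lt (blockPred_mem_Ioc hN0 hi1 hi').1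
    have := Nat.mul_le_mul_left ℓ (Nat.succ_le_of_lt hnext)
    rw [Nat.mul_succ] at this
    omega

end Height

lemma sum_average_sub (y : ℕ → ℝ) (ℓ : ℕ) :
    ∑ j ∈ Icc 1 ℓ, ((∑ t ∈ Icc 1 ℓ, y t) / ℓ - y j) = 0 := by
  rcases eq_or_ne ℓ 0 with rfl | hℓ
  · simp
  · rw [sum_sub_distrib, sum_const, Nat.card_Icc, nsmul_eq_mul, add_tsub_cancel_right,
      mul_div_cancel₀ _ (Nat.cast_ne_zero.mpr hℓ), sub_self]

section Permutation

variable {ℓ : ℕ} {w : EuclideanSpace ℝ (Fin ℓ) →ₗ[ℝ] EuclideanSpace ℝ (Fin ℓ)}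

lemma inner_apply_vec_E {σ τ : ℕ → ℕ} (hw : ∀ j ∈ Icc 1 ℓ, w (E ℓ j) = E ℓ (τ j))
    (hστ : ∀ j ∈ Icc 1 ℓ, σ (τ j) = j) (x : ℕ → ℝ) {i : ℕ} (hi : i ∈ Icc 1 ℓ)
    (hσi : σ i ∈ Icc 1 ℓ) (hτσ : τ (σ i) = i) :
    ⟪w (vec ℓ x), E ℓ i⟫ = x (σ i) := by
  obtain ⟨hi1, hiℓ⟩ := mem_Icc.mp hi
  rw [vec_eq_sum, map_sum, sum_inner, sum_eq_single (σ i)]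
  · rw [map_smul, real_inner_smul_left, hw _ hσi, hτσ, inner_E_self hi1 hiℓ, mul_one]
  · intro j hj hne
    rw [map_smul, real_inner_smul_left, hw _ hj, inner_E_E_of_ne, mul_zero]
    rintro rfl
    exact hne (hστ j hj).symm
  · exact fun h => absurd hσi h

variable {k : ℕ} {N : ℕ → ℕ}

lemma apply_E_eq_blockSucc (hN0 : N 0 = 0)
    (hw : ∀ c, 1 ≤ c → c ≤ k →
      (∀ j, N (c - 1) + 1 ≤ j → j + 1 ≤ N c → w (E ℓ j) = E ℓ (j + 1)) ∧
      w (E ℓ (N c)) = E ℓ (N (c - 1) + 1))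
    {j : ℕ} (hj1 : 1 ≤ j) (hj : j ≤ N k) : w (E ℓ j) = E ℓ (blockSucc N j) := by
  obtain ⟨h1, h2⟩ := mem_Ioc_blockOf hN0 hj1 hj
  have hc := hw _ (one_le_blockOf hN0 hj1 hj) (blockOf_le hj)
  unfold blockSucc
  split_ifs with hlast
  · rw [← hlast] at hc
    exact hc.2
  · exact hc.1 j (by omega) (by omega)

lemma inner_apply_vec_E_eq_blockPred (hN : Monotone N) (hN0 : N 0 = 0) (hNk : N k = ℓ)
    (hw : ∀ j, 1 ≤ j → j ≤ ℓ → w (E ℓ j) = E ℓ (blockSucc N j))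
    (x : ℕ → ℝ) {i : ℕ} (hi1 : 1 ≤ i) (hi : i ≤ ℓ) :
    ⟪w (vec ℓ x), E ℓ i⟫ = x (blockPred N i) := by
  subst hNk
  have hσi := blockPred_mem_Ioc hN0 hi1 hi
  refine inner_apply_vec_E (fun j hj => hw j (mem_Icc.mp hj).1 (mem_Icc.mp hj).2)
    (fun j hj => blockPred_blockSucc hN hN0 (mem_Icc.mp hj).1 (mem_Icc.mp hj).2) x
    (mem_Icc.mpr ⟨hi1, hi⟩)
    (mem_Icc.mpr ⟨Nat.one_le_of_lt hσi.1, hσi.2.trans (hN (blockOf_le hi))⟩)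
    (blockSucc_blockPred hN hN0 hi1 hi)

lemma inner_smul_vec_sub_apply_vec {σ : ℕ → ℕ} {x : ℕ → ℝ}
    (hwx : ∀ i, 1 ≤ i → i ≤ ℓ → ⟪w (vec ℓ x), E ℓ i⟫ = x (σ i))
    (q : ℝ) {i : ℕ} (hi1 : 1 ≤ i) (hi : i + 1 ≤ ℓ) :
    ⟪q • vec ℓ x - w (vec ℓ x), E ℓ i - E ℓ (i + 1)⟫ =
      q * (x i - x (i + 1)) - (x (σ i) - x (σ (i + 1))) := by
  rw [inner_sub_right, inner_sub_left, inner_sub_left, real_inner_smul_left, real_inner_smul_left,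
    inner_vec_E x hi1 (by omega), inner_vec_E x (by omega) hi, hwx i hi1 (by omega),
    hwx (i + 1) (by omega) hi]
  ring

end Permutation

theorem stmt_6_general (ℓ : ℕ) (q : ℝ) (hq : 2 ≤ q)
    (k : ℕ) (lam : ℕ → ℕ)
    (hsum : ∑ j ∈ Finset.Icc 1 k, lam j = ℓ)
    (w : EuclideanSpace ℝ (Fin ℓ) →ₗ[ℝ] EuclideanSpace ℝ (Fin ℓ))
    (hw : ∀ i, 1 ≤ i → i ≤ k →
      (∀ j, (∑ t ∈ Finset.Icc 1 (i - 1), lam t) + 1 ≤ j →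
          j + 1 ≤ ∑ t ∈ Finset.Icc 1 i, lam t → w (E ℓ j) = E ℓ (j + 1)) ∧
      w (E ℓ (∑ t ∈ Finset.Icc 1 i, lam t))
        = E ℓ ((∑ t ∈ Finset.Icc 1 (i - 1), lam t) + 1)) :
    ∃ x : ℕ → ℝ,
      (∀ j, 1 ≤ j → j < ℓ → x (j + 1) < x j) ∧
      (∑ j ∈ Finset.Icc 1 ℓ, x j = 0) ∧
      (∀ i, 1 ≤ i → i + 1 ≤ ℓ →
        0 < ⟪q • vec ℓ x - w (vec ℓ x), E ℓ i - E ℓ (i + 1)⟫) := by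
  set N : ℕ → ℕ := fun c => ∑ t ∈ Icc 1 c, lam t
  have hN : Monotone N := fun a b hab => sum_le_sum_of_subset (Icc_subset_Icc_right hab)
  have hN0 : N 0 = 0 := by simp [N]
  have hNk : N k = ℓ := hsum
  have hwx := fun x i => inner_apply_vec_E_eq_blockPred (i := i) hN hN0 hNk
    (fun j hj1 hj => apply_E_eq_blockSucc hN0 hw hj1 (hNk ▸ hj)) x
  refine ⟨fun j => (∑ t ∈ Icc 1 ℓ, (blockHeight N ℓ t : ℝ)) / ℓ - blockHeight N ℓ j,
    fun j _ hj => ?_, sum_average_sub _ ℓ, fun i hi1 hi => ?_⟩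
  · simp only [sub_lt_sub_iff_left, Nat.cast_lt]
    exact blockHeight_lt_succ (show j + 1 ≤ N k by omega)
  · rw [inner_smul_vec_sub_apply_vec (hwx _) q hi1 hi]
    have hlt := (Nat.cast_lt (α := ℝ)).mpr
      (blockHeight_blockPred_succ_lt hN hN0 hNk.le hi1 (by omega))
    have hstep := (Nat.cast_lt (α := ℝ)).mpr
      (blockHeight_lt_succ (ℓ := ℓ) (show i + 1 ≤ N k by omega))
    push_cast at hlt
    nlinarith

/-- For a composition `λ` of `ℓ` and the product `w = w_λ` of the disjoint
cycles on the consecutive blocks `[m_i, n_i]`, there exists `x` in the open Weyl chamber of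
type `A_{ℓ-1}` (i.e. `x_1 > ⋯ > x_ℓ` and `Σ_j x_j = 0`) with `⟨qx - wx, e_i - e_{i+1}⟩ > 0`
for all `1 ≤ i ≤ ℓ-1`. -/
theorem stmt_6 (ℓ : ℕ) (hℓ : 2 ≤ ℓ) (q : ℝ) (hq : 2 ≤ q)
    (k : ℕ) (hk : 1 ≤ k) (lam : ℕ → ℕ)
    (hlam : ∀ i, 1 ≤ i → i ≤ k → 1 ≤ lam i)
    (hsum : ∑ j ∈ Finset.Icc 1 k, lam j = ℓ)
    (w : EuclideanSpace ℝ (Fin ℓ) →ₗ[ℝ] EuclideanSpace ℝ (Fin ℓ))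
    (hw : ∀ i, 1 ≤ i → i ≤ k →
      (∀ j, (∑ t ∈ Finset.Icc 1 (i - 1), lam t) + 1 ≤ j →
          j + 1 ≤ ∑ t ∈ Finset.Icc 1 i, lam t → w (E ℓ j) = E ℓ (j + 1)) ∧
      w (E ℓ (∑ t ∈ Finset.Icc 1 i, lam t))
        = E ℓ ((∑ t ∈ Finset.Icc 1 (i - 1), lam t) + 1)) :
    ∃ x : ℕ → ℝ,
      (∀ j, 1 ≤ j → j < ℓ → x (j + 1) < x j) ∧
      (∑ j ∈ Finset.Icc 1 ℓ, x j = 0) ∧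
      (∀ i, 1 ≤ i → i + 1 ≤ ℓ →
        0 < ⟪q • vec ℓ x - w (vec ℓ x), E ℓ i - E ℓ (i + 1)⟫) :=
  stmt_6_general ℓ q hq k lam hsum w hw
end

section
/- Let ℓ ≥ 2 and let q ≥ 2 be a real number. Let λ = (λ_1,…,λ_k) be a composition of ℓ, set m_i = λ_1+⋯+λ_{i−1}+1 and n_i = λ_1+⋯+λ_i, and let ε = (ε_1,…,ε_k) ∈ {+1,−1}^k. Let w = w_{λ,ε} : ℝ^ℓ → ℝ^ℓ be the linear map determined by w(e_j) = e_{j+1} for m_i ≤ j ≤ n_i−1 and w(e_{n_i}) = ε_i·e_{m_i}, for each 1 ≤ i ≤ k. Then there exists x = (x_1,…,x_ℓ) ∈ ℝ^ℓ with x_1 > x_2 > ⋯ > x_ℓ > 0 such that ⟨qx − wx, e_1⟩ > 0 and ⟨qx − wx, e_i − e_{i+1}⟩ > 0 for all 1 ≤ i ≤ ℓ−1. -/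
open scoped RealInnerProductSpace

/-!
Inside a block `w` shifts coordinates, and at a block start `m_i` it brings back `ε_i x_{n_i}`;
so for `y = qx - wx` one has `y_j = q x_j - x_{j-1}` except at block starts, where
`y_{m_i} = q x_{m_i} - ε_i x_{n_i}` is within `x_{m_i}` of `q x_{m_i}` as soon as `x` decreases.
Let `x` decrease by a factor `3/4` at each step inside a block and by `1/6` from one block to the
next. Inside a block `y` then decreases because `3q/4 > 1`; across a boundary,
`y_{n_i + 1} ≤ (q + 1) x_{n_i} / 6` stays below `y_{n_i}`, which is `(3q/4 - 1) x_{n_i - 1}` or, for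
a block of length one, at least `(q - 1) x_{n_i}`.
-/

open Finset

theorem exists_lt_and_le_succ (f : ℕ → ℕ) {j : ℕ} (h0 : f 0 < j) :
    ∀ {k}, j ≤ f k → ∃ i < k, f i < j ∧ j ≤ f (i + 1)
  | 0, hk => absurd hk (by omega)
  | k + 1, hk => by
    by_cases hj : j ≤ f k
    · obtain ⟨i, hi, h⟩ := exists_lt_and_le_succ f h0 hj
      exact ⟨i, by omega, h⟩
    · exact ⟨k, by omega, by omega, hk⟩

theorem Monotone.eq_of_lt_of_le_succ {f : ℕ → ℕ} (hf : Monotone f) {i i' j : ℕ}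
    (h : f i < j) (h' : j ≤ f (i + 1)) (g : f i' < j) (g' : j ≤ f (i' + 1)) : i = i' := by
  by_contra hne
  rcases Nat.lt_or_gt_of_ne hne with hlt | hlt
  · have := hf (show i + 1 ≤ i' by omega); omega
  · have := hf (show i' + 1 ≤ i by omega); omega

theorem Monotone.apply_ne_of_lt_of_lt_succ {f : ℕ → ℕ} (hf : Monotone f) {i j : ℕ}
    (h : f i < j) (h' : j < f (i + 1)) (t : ℕ) : f t ≠ j := by
  rcases le_or_gt t i with hti | hti
  · exact (lt_of_le_of_lt (hf hti) h).ne
  · exact (lt_of_lt_of_le h' (hf (Nat.succ_le_of_lt hti))).ne'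

theorem inner_E_right {ℓ a : ℕ} (ha : 1 ≤ a) (ha' : a ≤ ℓ) (v : EuclideanSpace ℝ (Fin ℓ)) :
    ⟪v, E ℓ a⟫ = v ⟨a - 1, by omega⟩ := by
  rw [E, dif_pos ⟨ha, ha'⟩, EuclideanSpace.inner_single_right, one_mul, conj_trivial]

theorem inner_E_E {ℓ a : ℕ} (ha : 1 ≤ a) (ha' : a ≤ ℓ) (b : ℕ) :
    ⟪E ℓ b, E ℓ a⟫ = if b = a then 1 else 0 := by
  rw [inner_E_right ha ha', E]
  split_ifs <;> simp [PiLp.single_apply, Fin.ext_iff] <;> omega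

theorem inner_vec_E_s8 {ℓ a : ℕ} (ha : 1 ≤ a) (ha' : a ≤ ℓ) (x : ℕ → ℝ) :
    ⟪vec ℓ x, E ℓ a⟫ = x a := by
  rw [inner_E_right ha ha', vec]
  exact congrArg x (by simp; omega)

theorem vec_eq_sum_smul_E (ℓ : ℕ) (x : ℕ → ℝ) :
    vec ℓ x = ∑ j ∈ Icc 1 ℓ, x j • E ℓ j := by
  ext p
  rw [WithLp.ofLp_sum, Finset.sum_apply, Finset.sum_eq_single_of_mem (p.1 + 1) (by simp)]
  · simp [vec, E]
  · intro b hb hne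
    simp only [mem_Icc] at hb
    simp [E, dif_pos hb, Fin.ext_iff]
    omega

theorem inner_smul_sub_map_vec_E {ℓ a : ℕ} (ha : 1 ≤ a) (ha' : a ≤ ℓ) (q : ℝ)
    (w : EuclideanSpace ℝ (Fin ℓ) →ₗ[ℝ] EuclideanSpace ℝ (Fin ℓ)) (x : ℕ → ℝ) :
    ⟪q • vec ℓ x - w (vec ℓ x), E ℓ a⟫ = q * x a - ⟪w (vec ℓ x), E ℓ a⟫ := by
  rw [inner_sub_left, real_inner_smul_left, inner_vec_E_s8 ha ha']

theorem inner_map_vec_E_of_forall_ne {ℓ : ℕ}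
    (w : EuclideanSpace ℝ (Fin ℓ) →ₗ[ℝ] EuclideanSpace ℝ (Fin ℓ)) (x : ℕ → ℝ) {a j₀ : ℕ}
    (hj₀ : j₀ ∈ Icc 1 ℓ) (h : ∀ j ∈ Icc 1 ℓ, j ≠ j₀ → ⟪w (E ℓ j), E ℓ a⟫ = 0) :
    ⟪w (vec ℓ x), E ℓ a⟫ = x j₀ * ⟪w (E ℓ j₀), E ℓ a⟫ := by
  rw [vec_eq_sum_smul_E, map_sum, sum_inner, sum_eq_single_of_mem j₀ hj₀]
  · rw [map_smul, real_inner_smul_left]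
  · intro j hj hne
    rw [map_smul, real_inner_smul_left, h j hj hne, mul_zero]

def blockEnd (lam : ℕ → ℕ) (i : ℕ) : ℕ := ∑ t ∈ Icc 1 i, lam t

theorem blockEnd_zero (lam : ℕ → ℕ) : blockEnd lam 0 = 0 := by simp [blockEnd]

theorem blockEnd_succ (lam : ℕ → ℕ) (i : ℕ) :
    blockEnd lam (i + 1) = blockEnd lam i + lam (i + 1) :=
  sum_Icc_succ_top (by omega) lam

theorem blockEnd_monotone (lam : ℕ → ℕ) : Monotone (blockEnd lam) := fun _ _ h =>
  sum_le_sum_of_subset (Icc_subset_Icc_right h)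

/-- Blocks are indexed from `0`: block `i + 1` of the paper, `[m_{i+1}, n_{i+1}]`, is
`(blockEnd lam i, blockEnd lam (i + 1)]`. -/
structure IsSignedBlockCycle (ℓ k : ℕ) (lam : ℕ → ℕ) (eps : ℕ → ℝ)
    (w : EuclideanSpace ℝ (Fin ℓ) →ₗ[ℝ] EuclideanSpace ℝ (Fin ℓ)) : Prop where
  one_le_lam : ∀ i < k, 1 ≤ lam (i + 1)
  blockEnd_eq : blockEnd lam k = ℓ
  eps_eq : ∀ i < k, eps (i + 1) = 1 ∨ eps (i + 1) = -1
  map_E_of_lt : ∀ i < k, ∀ j, blockEnd lam i + 1 ≤ j → j + 1 ≤ blockEnd lam (i + 1) →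
    w (E ℓ j) = E ℓ (j + 1)
  map_E_blockEnd : ∀ i < k,
    w (E ℓ (blockEnd lam (i + 1))) = eps (i + 1) • E ℓ (blockEnd lam i + 1)

open Classical in
noncomputable def stepRatio (lam : ℕ → ℕ) (t : ℕ) : ℝ :=
  if ∃ i, blockEnd lam i = t then 1 / 6 else 3 / 4

noncomputable def witness (lam : ℕ → ℕ) (j : ℕ) : ℝ := ∏ t ∈ range j, stepRatio lam t

theorem stepRatio_pos (lam : ℕ → ℕ) (t : ℕ) : 0 < stepRatio lam t := by
  unfold stepRatio; split_ifs <;> norm_num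

theorem stepRatio_lt_one (lam : ℕ → ℕ) (t : ℕ) : stepRatio lam t < 1 := by
  unfold stepRatio; split_ifs <;> norm_num

theorem witness_succ (lam : ℕ → ℕ) (j : ℕ) :
    witness lam (j + 1) = stepRatio lam j * witness lam j := by
  rw [witness, witness, prod_range_succ, mul_comm]

theorem witness_pos (lam : ℕ → ℕ) (j : ℕ) : 0 < witness lam j :=
  prod_pos fun t _ => stepRatio_pos lam t

theorem witness_succ_lt (lam : ℕ → ℕ) (j : ℕ) : witness lam (j + 1) < witness lam j := by
  rw [witness_succ]
  exact mul_lt_of_lt_one_left (witness_pos lam j) (stepRatio_lt_one lam j)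

theorem witness_antitone (lam : ℕ → ℕ) : Antitone (witness lam) :=
  antitone_nat_of_succ_le fun j => (witness_succ_lt lam j).le

theorem witness_blockEnd_succ (lam : ℕ → ℕ) (i : ℕ) :
    witness lam (blockEnd lam i + 1) = 1 / 6 * witness lam (blockEnd lam i) := by
  rw [witness_succ, stepRatio, if_pos ⟨i, rfl⟩]

theorem witness_succ_of_lt (lam : ℕ → ℕ) {i j : ℕ} (h : blockEnd lam i < j)
    (h' : j < blockEnd lam (i + 1)) : witness lam (j + 1) = 3 / 4 * witness lam j := by
  rw [witness_succ, stepRatio, if_neg]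
  rintro ⟨t, ht⟩
  exact (blockEnd_monotone lam).apply_ne_of_lt_of_lt_succ h h' t ht

namespace IsSignedBlockCycle

variable {ℓ k : ℕ} {lam : ℕ → ℕ} {eps : ℕ → ℝ}
  {w : EuclideanSpace ℝ (Fin ℓ) →ₗ[ℝ] EuclideanSpace ℝ (Fin ℓ)}

theorem blockEnd_le (hw : IsSignedBlockCycle ℓ k lam eps w) {i : ℕ} (hi : i ≤ k) :
    blockEnd lam i ≤ ℓ :=
  hw.blockEnd_eq ▸ blockEnd_monotone lam hi

theorem blockEnd_lt_succ (hw : IsSignedBlockCycle ℓ k lam eps w) {i : ℕ} (hi : i < k) :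
    blockEnd lam i < blockEnd lam (i + 1) := by
  have := hw.one_le_lam i hi
  rw [blockEnd_succ]; omega

theorem exists_block (hw : IsSignedBlockCycle ℓ k lam eps w) {j : ℕ} (hj : 1 ≤ j)
    (hj' : j ≤ ℓ) : ∃ i < k, blockEnd lam i < j ∧ j ≤ blockEnd lam (i + 1) :=
  exists_lt_and_le_succ _ (by rw [blockEnd_zero]; omega) (hw.blockEnd_eq ▸ hj')

theorem inner_map_vec_E_succ (hw : IsSignedBlockCycle ℓ k lam eps w) {i j : ℕ} (hi : i < k)
    (hj : blockEnd lam i + 1 ≤ j) (hj' : j + 1 ≤ blockEnd lam (i + 1)) (x : ℕ → ℝ) :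
    ⟪w (vec ℓ x), E ℓ (j + 1)⟫ = x j := by
  have := hw.blockEnd_le (i := i + 1) hi
  rw [inner_map_vec_E_of_forall_ne w x (j₀ := j) (by simp; omega), hw.map_E_of_lt i hi j hj hj',
    inner_E_E (by omega) (by omega), if_pos rfl, mul_one]
  intro b hb hne
  rw [mem_Icc] at hb
  obtain ⟨i', hi', hb₁, hb₂⟩ := hw.exists_block hb.1 hb.2
  rcases hb₂.lt_or_eq with hlt | rfl
  · rw [hw.map_E_of_lt i' hi' b (by omega) (by omega), inner_E_E (by omega) (by omega),
      if_neg (by omega)]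
  · have hne' := (blockEnd_monotone lam).apply_ne_of_lt_of_lt_succ (i := i) (j := j)
      (by omega) (by omega) i'
    rw [hw.map_E_blockEnd i' hi', real_inner_smul_left, inner_E_E (by omega) (by omega),
      if_neg (by omega), mul_zero]

theorem inner_map_vec_E_blockStart (hw : IsSignedBlockCycle ℓ k lam eps w) {i : ℕ} (hi : i < k)
    (x : ℕ → ℝ) :
    ⟪w (vec ℓ x), E ℓ (blockEnd lam i + 1)⟫ = eps (i + 1) * x (blockEnd lam (i + 1)) := by
  have := hw.blockEnd_le (i := i + 1) hi
  have := hw.blockEnd_lt_succ hi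
  rw [inner_map_vec_E_of_forall_ne w x (j₀ := blockEnd lam (i + 1)) (by simp; omega),
    hw.map_E_blockEnd i hi, real_inner_smul_left, inner_E_E (by omega) (by omega), if_pos rfl,
    mul_one, mul_comm]
  intro b hb hne
  rw [mem_Icc] at hb
  obtain ⟨i', hi', hb₁, hb₂⟩ := hw.exists_block hb.1 hb.2
  rcases hb₂.lt_or_eq with hlt | rfl
  · have hne' := (blockEnd_monotone lam).apply_ne_of_lt_of_lt_succ hb₁ hlt i
    rw [hw.map_E_of_lt i' hi' b (by omega) (by omega), inner_E_E (by omega) (by omega),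
      if_neg (by omega)]
  · have := hw.blockEnd_lt_succ hi'
    have hii' : blockEnd lam i' ≠ blockEnd lam i := fun h =>
      hne <| congrArg (fun t => blockEnd lam (t + 1)) <|
        (blockEnd_monotone lam).eq_of_lt_of_le_succ (j := blockEnd lam i + 1)
          (by omega) (by omega) (by omega) (by omega)
    rw [hw.map_E_blockEnd i' hi', real_inner_smul_left, inner_E_E (by omega) (by omega),
      if_neg (by omega), mul_zero]

theorem abs_inner_map_vec_E_blockStart_le (hw : IsSignedBlockCycle ℓ k lam eps w) {i : ℕ}
    (hi : i < k) {x : ℕ → ℝ} (hx : Antitone x) (hx₀ : ∀ j, 0 ≤ x j) :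
    |⟪w (vec ℓ x), E ℓ (blockEnd lam i + 1)⟫| ≤ x (blockEnd lam i + 1) := by
  rw [hw.inner_map_vec_E_blockStart hi, abs_mul, abs_of_nonneg (hx₀ _)]
  rcases hw.eps_eq i hi with h | h <;> rw [h] <;> norm_num <;> exact hx (hw.blockEnd_lt_succ hi)

theorem coord_one_pos (hw : IsSignedBlockCycle ℓ k lam eps w) (hk : 0 < k) {q : ℝ}
    (hq : 1 < q) : 0 < ⟪q • vec ℓ (witness lam) - w (vec ℓ (witness lam)), E ℓ 1⟫ := by
  have hℓ : 1 ≤ ℓ := by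
    have := hw.blockEnd_lt_succ hk
    have := hw.blockEnd_le (i := 0 + 1) hk
    omega
  have hbound := hw.abs_inner_map_vec_E_blockStart_le hk (witness_antitone lam)
    fun j => (witness_pos lam j).le
  rw [blockEnd_zero, zero_add] at hbound
  rw [inner_smul_sub_map_vec_E le_rfl hℓ]
  nlinarith [abs_le.mp hbound, witness_pos lam 1]

theorem coord_succ_lt_of_lt (hw : IsSignedBlockCycle ℓ k lam eps w) {q : ℝ} (hq : 2 ≤ q)
    {i a : ℕ} (hi : i < k) (ha : blockEnd lam i < a) (ha' : a < blockEnd lam (i + 1)) :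
    ⟪q • vec ℓ (witness lam) - w (vec ℓ (witness lam)), E ℓ (a + 1)⟫ <
      ⟪q • vec ℓ (witness lam) - w (vec ℓ (witness lam)), E ℓ a⟫ := by
  have := hw.blockEnd_le (i := i + 1) hi
  rw [inner_smul_sub_map_vec_E (by omega) (by omega),
    inner_smul_sub_map_vec_E (by omega) (by omega), hw.inner_map_vec_E_succ hi (by omega) ha']
  rcases (show a = blockEnd lam i + 1 ∨ blockEnd lam i + 1 < a by omega) with rfl | hlt
  · have hbound := hw.abs_inner_map_vec_E_blockStart_le hi (witness_antitone lam)
      fun j => (witness_pos lam j).le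
    nlinarith [abs_le.mp hbound, witness_succ_lt lam (blockEnd lam i + 1)]
  · obtain ⟨j, rfl⟩ : ∃ j, a = j + 1 := ⟨a - 1, by omega⟩
    rw [hw.inner_map_vec_E_succ hi (by omega) ha'.le, witness_succ_of_lt lam ha ha',
      witness_succ_of_lt lam (by omega : blockEnd lam i < j) (by omega)]
    nlinarith [witness_pos lam j]

theorem coord_succ_lt_of_eq (hw : IsSignedBlockCycle ℓ k lam eps w) {q : ℝ} (hq : 2 ≤ q)
    {i : ℕ} (hi : i + 1 < k) :
    ⟪q • vec ℓ (witness lam) - w (vec ℓ (witness lam)), E ℓ (blockEnd lam (i + 1) + 1)⟫ <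
      ⟪q • vec ℓ (witness lam) - w (vec ℓ (witness lam)), E ℓ (blockEnd lam (i + 1))⟫ := by
  have := hw.blockEnd_lt_succ hi
  have := hw.blockEnd_lt_succ (i := i) (by omega)
  have := hw.blockEnd_le (i := i + 1 + 1) hi
  rw [inner_smul_sub_map_vec_E (by omega) (by omega),
    inner_smul_sub_map_vec_E (by omega) (by omega), witness_blockEnd_succ]
  have hnext := abs_le.mp <| hw.abs_inner_map_vec_E_blockStart_le hi (witness_antitone lam)
    fun j => (witness_pos lam j).le
  rw [witness_blockEnd_succ] at hnext
  rcases (show blockEnd lam (i + 1) = blockEnd lam i + 1 ∨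
      blockEnd lam i + 1 < blockEnd lam (i + 1) by omega) with h | hlt
  · have hbound := abs_le.mp <| hw.abs_inner_map_vec_E_blockStart_le (i := i) (by omega)
      (witness_antitone lam) fun j => (witness_pos lam j).le
    rw [← h] at hbound
    nlinarith [witness_pos lam (blockEnd lam (i + 1))]
  · obtain ⟨j, hj⟩ : ∃ j, blockEnd lam (i + 1) = j + 1 :=
      ⟨blockEnd lam (i + 1) - 1, by omega⟩
    rw [hj, hw.inner_map_vec_E_succ (i := i) (j := j) (by omega) (by omega) (by omega),
      witness_succ_of_lt lam (i := i) (by omega) (by omega)]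
    rw [hj, witness_succ_of_lt lam (i := i) (j := j) (by omega) (by omega)] at hnext
    nlinarith [witness_pos lam j]

theorem coord_succ_lt (hw : IsSignedBlockCycle ℓ k lam eps w) {q : ℝ} (hq : 2 ≤ q) {a : ℕ}
    (ha : 1 ≤ a) (ha' : a + 1 ≤ ℓ) :
    ⟪q • vec ℓ (witness lam) - w (vec ℓ (witness lam)), E ℓ (a + 1)⟫ <
      ⟪q • vec ℓ (witness lam) - w (vec ℓ (witness lam)), E ℓ a⟫ := by
  obtain ⟨i, hi, h₁, h₂⟩ := hw.exists_block ha (by omega)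
  rcases h₂.lt_or_eq with hlt | rfl
  · exact hw.coord_succ_lt_of_lt hq hi h₁ hlt
  · refine hw.coord_succ_lt_of_eq hq (lt_of_not_ge fun hik => ?_)
    have := blockEnd_monotone lam hik
    have := hw.blockEnd_eq
    omega

end IsSignedBlockCycle

theorem stmt_8_general (ℓ : ℕ) (q : ℝ) (hq : 2 ≤ q)
    (k : ℕ) (hk : 1 ≤ k) (lam : ℕ → ℕ)
    (hlam : ∀ i, 1 ≤ i → i ≤ k → 1 ≤ lam i)
    (hsum : ∑ j ∈ Finset.Icc 1 k, lam j = ℓ)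
    (eps : ℕ → ℝ) (heps : ∀ i, 1 ≤ i → i ≤ k → eps i = 1 ∨ eps i = -1)
    (w : EuclideanSpace ℝ (Fin ℓ) →ₗ[ℝ] EuclideanSpace ℝ (Fin ℓ))
    (hw : ∀ i, 1 ≤ i → i ≤ k →
      (∀ j, (∑ t ∈ Finset.Icc 1 (i - 1), lam t) + 1 ≤ j →
          j + 1 ≤ ∑ t ∈ Finset.Icc 1 i, lam t → w (E ℓ j) = E ℓ (j + 1)) ∧
      w (E ℓ (∑ t ∈ Finset.Icc 1 i, lam t))
        = eps i • E ℓ ((∑ t ∈ Finset.Icc 1 (i - 1), lam t) + 1)) :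
    ∃ x : ℕ → ℝ,
      (∀ j, 1 ≤ j → j < ℓ → x (j + 1) < x j) ∧ 0 < x ℓ ∧
      0 < ⟪q • vec ℓ x - w (vec ℓ x), E ℓ 1⟫ ∧
      (∀ i, 1 ≤ i → i + 1 ≤ ℓ →
        0 < ⟪q • vec ℓ x - w (vec ℓ x), E ℓ i - E ℓ (i + 1)⟫) := by
  have hcycle : IsSignedBlockCycle ℓ k lam eps w :=
    { one_le_lam := fun i hi => hlam (i + 1) (by omega) hi
      blockEnd_eq := hsum
      eps_eq := fun i hi => heps (i + 1) (by omega) hi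
      map_E_of_lt := fun i hi => by
        simpa only [blockEnd, Nat.add_sub_cancel] using (hw (i + 1) (by omega) hi).1
      map_E_blockEnd := fun i hi => by
        simpa only [blockEnd, Nat.add_sub_cancel] using (hw (i + 1) (by omega) hi).2 }
  refine ⟨witness lam, fun j _ _ => witness_succ_lt lam j, witness_pos lam ℓ,
    hcycle.coord_one_pos hk (by linarith), fun a ha ha' => ?_⟩
  rw [inner_sub_right, sub_pos]
  exact hcycle.coord_succ_lt hq ha ha'

/-- type `B_ℓ`. For a composition `λ` of `ℓ`, signs `ε_i ∈ {±1}`, and the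
signed block-cycle element `w = w_{λ,ε}`, there exists `x_1 > ⋯ > x_ℓ > 0` with
`⟨qx - wx, e_1⟩ > 0` and `⟨qx - wx, e_i - e_{i+1}⟩ > 0` for all `1 ≤ i ≤ ℓ-1`. -/
theorem stmt_8 (ℓ : ℕ) (hℓ : 2 ≤ ℓ) (q : ℝ) (hq : 2 ≤ q)
    (k : ℕ) (hk : 1 ≤ k) (lam : ℕ → ℕ)
    (hlam : ∀ i, 1 ≤ i → i ≤ k → 1 ≤ lam i)
    (hsum : ∑ j ∈ Finset.Icc 1 k, lam j = ℓ)
    (eps : ℕ → ℝ) (heps : ∀ i, 1 ≤ i → i ≤ k → eps i = 1 ∨ eps i = -1)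
    (w : EuclideanSpace ℝ (Fin ℓ) →ₗ[ℝ] EuclideanSpace ℝ (Fin ℓ))
    (hw : ∀ i, 1 ≤ i → i ≤ k →
      (∀ j, (∑ t ∈ Finset.Icc 1 (i - 1), lam t) + 1 ≤ j →
          j + 1 ≤ ∑ t ∈ Finset.Icc 1 i, lam t → w (E ℓ j) = E ℓ (j + 1)) ∧
      w (E ℓ (∑ t ∈ Finset.Icc 1 i, lam t))
        = eps i • E ℓ ((∑ t ∈ Finset.Icc 1 (i - 1), lam t) + 1)) :
    ∃ x : ℕ → ℝ,
      (∀ j, 1 ≤ j → j < ℓ → x (j + 1) < x j) ∧ 0 < x ℓ ∧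
      0 < ⟪q • vec ℓ x - w (vec ℓ x), E ℓ 1⟫ ∧
      (∀ i, 1 ≤ i → i + 1 ≤ ℓ →
        0 < ⟪q • vec ℓ x - w (vec ℓ x), E ℓ i - E ℓ (i + 1)⟫) :=
  stmt_8_general ℓ q hq k hk lam hlam hsum eps heps w hw
end
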